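/- arXiv:math-ph/0311049 — 2 statements merged into one kernel-verified Lean document; each statement's English description precedes it below -/
import Mathlib

section
/- For every integer d ≥ 1, every finite nonempty Λ ⊂ ℤ^d, every x ∈ Λ, and every k ∈ [−π,π]^d with ε_k ≤ 2, one has |b_k(x)|² ≥ (1 − ε_k)·b_0(x)², where b_0(x) = #{unit lattice vectors e : x+e ∉ Λ} if x ∈ ∂Λ and b_0(x) = 0 otherwise. -/
/-!
Since every term `1 - cos kᵢ` of `ε_k / 2` is nonnegative, each `cos kⱼ` is at least `1 - ε_k / 2`.
Hence, after dropping the unimodular phase `e^{-i k·x}`, the real part of the sum defining `b_k(x)`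
is at least `b_0(x) (1 - ε_k / 2) ≥ 0`, and squaring together with `(1 - ε/2)² ≥ 1 - ε` gives the bound.
-/

open scoped BigOperators

noncomputable section

/-- `ℓ¹` distance on `ℤ^d`. -/
def dist1 (d : ℕ) (x y : Fin d → ℤ) : ℕ := ∑ i, (x i - y i).natAbs

/-- Lattice dispersion relation `ε_k = 2d − 2 Σᵢ cos kᵢ`. -/
def epsk (d : ℕ) (k : Fin d → ℝ) : ℝ := 2 * d - 2 * ∑ i, Real.cos (k i)

/-- The `2d` unit lattice vectors of `ℤ^d`, indexed by a coordinate and a sign. -/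
def unitVec (d : ℕ) (p : Fin d × Bool) : Fin d → ℤ :=
  fun j => if j = p.1 then (if p.2 then 1 else -1) else 0

/-- `B(Λ)`: the number of bonds `(x, y)` with `x ∈ Λ`, `y ∉ Λ`, `|x − y|₁ = 1`. -/
def bonds (d : ℕ) (Λ : Finset (Fin d → ℤ)) : ℕ :=
  ∑ x ∈ Λ, (Finset.univ.filter fun p : Fin d × Bool => x + unitVec d p ∉ Λ).card

/-- `∂Λ`: sites of `Λ` having a nearest neighbor outside `Λ`. -/
def bdry (d : ℕ) (Λ : Finset (Fin d → ℤ)) : Finset (Fin d → ℤ) :=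
  Λ.filter fun x => ∃ p : Fin d × Bool, x + unitVec d p ∉ Λ

/-- The boundary vector
`b_k(x) = χ_{∂Λ}(x)·e^{−i k·x}·Σ_{e : x+e ∉ Λ} e^{−i k·e}` (it vanishes outside `∂Λ`,
since the sum over outward unit vectors is then empty). -/
def bk (d : ℕ) (Λ : Finset (Fin d → ℤ)) (k : Fin d → ℝ) (x : Fin d → ℤ) : ℂ :=
  if x ∈ Λ then
    Complex.exp (-Complex.I * ∑ i, (k i : ℂ) * ((x i : ℤ) : ℂ)) *
      ∑ p ∈ Finset.univ.filter (fun p : Fin d × Bool => x + unitVec d p ∉ Λ),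
        Complex.exp (-Complex.I * (if p.2 then (k p.1 : ℂ) else -(k p.1 : ℂ)))
  else 0

/-- The discrete Laplacian `h_Λ` acting on functions extended by zero outside `Λ`:
`(h_Λ φ)(x) = −Σ_{y∈Λ, |y−x|₁=1} φ(y) + 2d·φ(x)`. -/
def lapAct (d : ℕ) (Λ : Finset (Fin d → ℤ)) (φ : (Fin d → ℤ) → ℂ) (x : Fin d → ℤ) : ℂ :=
  -∑ y ∈ Λ.filter (fun y => dist1 d x y = 1), φ y + 2 * d * φ x

/-- `b_0(x)` is the cardinality of this set. -/
abbrev outwardDirs (d : ℕ) (Λ : Finset (Fin d → ℤ)) (x : Fin d → ℤ) : Finset (Fin d × Bool) :=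
  Finset.univ.filter fun p => x + unitVec d p ∉ Λ

theorem one_sub_cos_le_half_epsk {d : ℕ} (k : Fin d → ℝ) (j : Fin d) :
    1 - Real.cos (k j) ≤ epsk d k / 2 := by
  have h : 1 - Real.cos (k j) ≤ ∑ i, (1 - Real.cos (k i)) :=
    Finset.single_le_sum (f := fun i => 1 - Real.cos (k i))
      (fun i _ => sub_nonneg.2 (Real.cos_le_one (k i))) (Finset.mem_univ j)
  simp only [Finset.sum_sub_distrib, Finset.sum_const, Finset.card_univ, Fintype.card_fin,
    nsmul_eq_mul, mul_one] at h
  unfold epsk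
  linarith

theorem sum_cos_le_norm_sum_exp {ι : Type*} (s : Finset ι) (θ : ι → ℝ) :
    ∑ p ∈ s, Real.cos (θ p) ≤ ‖∑ p ∈ s, Complex.exp (θ p * Complex.I)‖ := by
  calc ∑ p ∈ s, Real.cos (θ p) = (∑ p ∈ s, Complex.exp (θ p * Complex.I)).re := by
        simp only [Complex.re_sum, Complex.exp_ofReal_mul_I_re]
    _ ≤ _ := Complex.re_le_norm _

theorem norm_bk {d : ℕ} {Λ : Finset (Fin d → ℤ)} {x : Fin d → ℤ} (hx : x ∈ Λ) (k : Fin d → ℝ) :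
    ‖bk d Λ k x‖ = ‖∑ p ∈ outwardDirs d Λ x,
      Complex.exp (((if p.2 then -k p.1 else k p.1 : ℝ) : ℂ) * Complex.I)‖ := by
  have hphase : ‖Complex.exp (-Complex.I * ∑ i, (k i : ℂ) * ((x i : ℤ) : ℂ))‖ = 1 := by
    rw [Complex.norm_exp]
    simp [Complex.mul_re]
  rw [bk, if_pos hx, norm_mul, hphase, one_mul]
  congr 1
  refine Finset.sum_congr rfl fun p _ => ?_
  split_ifs <;> push_cast <;> ring_nf

theorem card_mul_le_norm_bk {d : ℕ} {Λ : Finset (Fin d → ℤ)} {x : Fin d → ℤ} (hx : x ∈ Λ)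
    (k : Fin d → ℝ) :
    (outwardDirs d Λ x).card * (1 - epsk d k / 2) ≤ ‖bk d Λ k x‖ := by
  rw [norm_bk hx]
  calc (outwardDirs d Λ x).card * (1 - epsk d k / 2)
      = ∑ _p ∈ outwardDirs d Λ x, (1 - epsk d k / 2) := by
        rw [Finset.sum_const, nsmul_eq_mul]
    _ ≤ ∑ p ∈ outwardDirs d Λ x, Real.cos (if p.2 then -k p.1 else k p.1) :=
        Finset.sum_le_sum fun p _ => by
          rw [apply_ite Real.cos, Real.cos_neg, ite_self]
          linarith [one_sub_cos_le_half_epsk k p.1]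
    _ ≤ _ := sum_cos_le_norm_sum_exp _ _

theorem bk_pointwise_lower_general (d : ℕ) (Λ : Finset (Fin d → ℤ))
    (x : Fin d → ℤ) (hx : x ∈ Λ) (k : Fin d → ℝ)
    (he : epsk d k ≤ 2) :
    ‖bk d Λ k x‖ ^ 2 ≥ (1 - epsk d k) *
      (((Finset.univ.filter fun p : Fin d × Bool => x + unitVec d p ∉ Λ).card : ℝ)) ^ 2 := by
  set N : ℝ := ((outwardDirs d Λ x).card : ℝ)
  have hlower : 0 ≤ N * (1 - epsk d k / 2) := mul_nonneg (Nat.cast_nonneg _) (by linarith)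
  calc (1 - epsk d k) * N ^ 2 ≤ (N * (1 - epsk d k / 2)) ^ 2 := by
        nlinarith [sq_nonneg (epsk d k * N)]
    _ ≤ ‖bk d Λ k x‖ ^ 2 := pow_le_pow_left₀ hlower (card_mul_le_norm_bk hx k) 2

/-- For every `x ∈ Λ` and `k ∈ [−π,π]^d` with `ε_k ≤ 2`:
`|b_k(x)|² ≥ (1 − ε_k)·b_0(x)²`, where `b_0(x)` is the number of unit lattice vectors
`e` with `x + e ∉ Λ` (equal to `0` when `x ∉ ∂Λ`). -/
theorem bk_pointwise_lower (d : ℕ) (hd : 1 ≤ d) (Λ : Finset (Fin d → ℤ))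
    (hΛ : Λ.Nonempty) (x : Fin d → ℤ) (hx : x ∈ Λ) (k : Fin d → ℝ)
    (hk : ∀ i, |k i| ≤ Real.pi) (he : epsk d k ≤ 2) :
    ‖bk d Λ k x‖ ^ 2 ≥ (1 - epsk d k) *
      (((Finset.univ.filter fun p : Fin d × Bool => x + unitVec d p ∉ Λ).card : ℝ)) ^ 2 :=
  bk_pointwise_lower_general d Λ x hx k he

end
end

section
/- Fix an integer d ≥ 1, a parameter t ∈ [0,1], and densities ρ1, ρ2 > 0 with ρ1 + ρ2 < 1. Define the segregated energy per site E(ν) = (1−ν)·e(ρ1/(1−ν)) + t·ν·e(ρ2/ν) for ν ∈ [ρ2, 1−ρ1]. Then E is convex on [ρ2, 1−ρ1] and differentiable on its interior with derivative E′(ν) = ξ(ρ1/(1−ν)) − t·ξ(ρ2/ν). -/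
open scoped BigOperators

noncomputable section

/-- `k` belongs to the Brillouin zone `[−π, π]^d`. -/
def inBZ (d : ℕ) (k : Fin d → ℝ) : Prop := ∀ i, |k i| ≤ Real.pi

/-- Volume of `{k ∈ [−π,π]^d : ε_k < E}`. -/
def volBelow (d : ℕ) (E : ℝ) : ℝ :=
  (MeasureTheory.volume {k : Fin d → ℝ | inBZ d k ∧ epsk d k < E}).toReal

/-- The Fermi level `ε_F(ρ)`, defined by `ρ = (2π)^{−d}·vol{k ∈ [−π,π]^d : ε_k < ε_F(ρ)}`. -/
def fermiLevel (d : ℕ) (ρ : ℝ) : ℝ :=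
  sInf {E : ℝ | ρ ≤ volBelow d E / (2 * Real.pi) ^ d}

/-- Ground-state energy per site of free lattice fermions at density `ρ`:
`e(ρ) = (2π)^{−d} ∫_{ε_k < ε_F(ρ)} ε_k dk`. -/
def enGS (d : ℕ) (ρ : ℝ) : ℝ :=
  (∫ k in {k : Fin d → ℝ | inBZ d k ∧ epsk d k < fermiLevel d ρ}, epsk d k) /
    (2 * Real.pi) ^ d

/-- `ξ(ρ) = ρ·ε_F(ρ) − e(ρ)`. -/
def xiFun (d : ℕ) (ρ : ℝ) : ℝ := ρ * fermiLevel d ρ - enGS d ρ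

/-!
The density of states `ν = ε_* (Lebesgue on [-π, π]^d)` has no atoms (a level set of `ε` meets
each line parallel to the first axis in at most two points of the Brillouin zone) and charges
every open subinterval of `(0, 4d)` (the diagonal `k = (θ, …, θ)` sweeps through all energies).
Hence `N(E) = ν(-∞, E)` is continuous and strictly increasing on `[0, 4d]`, `ε_F` is a
continuous inverse of `N / (2π)^d`, and `e(ρ) = (2π)^{-d} ∫_{(-∞, ε_F(ρ))} E dν`. The increment
`e(ρ') - e(ρ)` is the integral of `E` over the shell `[ε_F(ρ), ε_F(ρ'))` of mass
`(2π)^d (ρ' - ρ)`, so it lies between `ε_F(ρ) (ρ' - ρ)` and `ε_F(ρ') (ρ' - ρ)`. This gives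
`e' = ε_F` on `(0, 1)` and makes `ξ` nondecreasing. Both terms of the segregated energy are
perspectives `x ↦ x e(c / x)`, whose derivative is `-ξ(c / x)`; so `E'` is
`ξ(ρ1 / (1 - ν)) - t ξ(ρ2 / ν)`, which is nondecreasing in `ν`, and `E` is convex.
-/

open MeasureTheory Real Set Filter Topology
open scoped NNReal

theorem div_mem_Ioc {a b : ℝ} (ha : 0 < a) (hab : a ≤ b) : a / b ∈ Ioc 0 1 :=
  ⟨div_pos ha (ha.trans_le hab), div_le_one_of_le₀ hab (ha.trans_le hab).le⟩

theorem div_mem_Ioo {a b : ℝ} (ha : 0 < a) (hab : a < b) : a / b ∈ Ioo 0 1 :=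
  ⟨div_pos ha (ha.trans hab), (div_lt_one (ha.trans hab)).2 hab⟩

theorem hasDerivAt_of_sub_mem_Icc {f g : ℝ → ℝ} {s : Set ℝ} {a : ℝ} (hs : s ∈ 𝓝 a)
    (hg : ContinuousAt g a)
    (h : ∀ x ∈ s, ∀ y ∈ s, x ≤ y → f y - f x ∈ Icc (g x * (y - x)) (g y * (y - x))) :
    HasDerivAt f (g a) a := by
  have hslope : ∀ y ∈ s, y ≠ a → slope f a y ∈ Icc (min (g a) (g y)) (max (g a) (g y)) := by
    intro y hy hya
    rw [slope_def_field]
    rcases hya.lt_or_gt with hlt | hlt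
    · obtain ⟨hlo, hhi⟩ := h y hy a (mem_of_mem_nhds hs) hlt.le
      rw [← neg_div_neg_eq, neg_sub, neg_sub]
      have hpos : 0 < a - y := sub_pos.2 hlt
      exact ⟨min_le_right _ _ |>.trans ((le_div_iff₀ hpos).2 hlo),
        ((div_le_iff₀ hpos).2 hhi).trans (le_max_left _ _)⟩
    · obtain ⟨hlo, hhi⟩ := h a (mem_of_mem_nhds hs) y hy hlt.le
      have hpos : 0 < y - a := sub_pos.2 hlt
      exact ⟨min_le_left _ _ |>.trans ((le_div_iff₀ hpos).2 hlo),
        ((div_le_iff₀ hpos).2 hhi).trans (le_max_right _ _)⟩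
  have hmin : Tendsto (fun y => min (g a) (g y)) (𝓝[≠] a) (𝓝 (g a)) := by
    simpa using ((tendsto_const_nhds (x := g a)).min hg.tendsto).mono_left nhdsWithin_le_nhds
  have hmax : Tendsto (fun y => max (g a) (g y)) (𝓝[≠] a) (𝓝 (g a)) := by
    simpa using ((tendsto_const_nhds (x := g a)).max hg.tendsto).mono_left nhdsWithin_le_nhds
  have hev : ∀ᶠ y in 𝓝[≠] a, slope f a y ∈ Icc (min (g a) (g y)) (max (g a) (g y)) := by
    filter_upwards [nhdsWithin_le_nhds hs, self_mem_nhdsWithin] with y hy hya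
    exact hslope y hy hya
  rw [hasDerivAt_iff_tendsto_slope]
  exact tendsto_of_tendsto_of_tendsto_of_le_of_le' hmin hmax (hev.mono fun _ h => h.1)
    (hev.mono fun _ h => h.2)

theorem hasDerivAt_mul_comp_div {f : ℝ → ℝ} {f' c x : ℝ} (hx : x ≠ 0)
    (hf : HasDerivAt f f' (c / x)) :
    HasDerivAt (fun x => x * f (c / x)) (f (c / x) - c / x * f') x := by
  have hdiv : HasDerivAt (fun x => c / x) (-(c / x ^ 2)) x := by
    simpa [div_eq_mul_inv] using (hasDerivAt_inv hx).const_mul c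
  refine ((hasDerivAt_id' x).mul (hf.comp x hdiv)).congr_deriv ?_
  rw [Function.comp_apply]
  field_simp
  ring

theorem convexOn_Icc_of_hasDerivAt {f f' : ℝ → ℝ} {a b : ℝ} (hf : ContinuousOn f (Icc a b))
    (hf' : ∀ x ∈ Ioo a b, HasDerivAt f (f' x) x) (hmono : MonotoneOn f' (Ioo a b)) :
    ConvexOn ℝ (Icc a b) f := by
  rw [← interior_Icc] at hf' hmono
  refine MonotoneOn.convexOn_of_deriv (convex_Icc a b) hf
    (fun x hx => (hf' x hx).differentiableAt.differentiableWithinAt) ?_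
  exact hmono.congr fun x hx => ((hf' x hx).deriv).symm

theorem measureReal_Iio_sub_Iio (ν : Measure ℝ) [IsFiniteMeasure ν] {a b : ℝ} (hab : a ≤ b) :
    ν.real (Iio b) - ν.real (Iio a) = ν.real (Ico a b) := by
  rw [← Iio_union_Ico_eq_Iio hab,
    measureReal_union ((Iio_disjoint_Ici le_rfl).mono_right Ico_subset_Ici_self) measurableSet_Ico]
  ring

theorem continuous_measureReal_Iio (ν : Measure ℝ) [IsFiniteMeasure ν] [NullSingletonClass ν] :
    Continuous fun E => ν.real (Iio E) := by
  refine continuous_iff_continuousAt.2 fun E₀ => ?_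
  have hdist : Tendsto (fun E => |E - E₀|) (𝓝 E₀) (𝓝 0) :=
    (continuous_id.sub continuous_const).abs.tendsto' E₀ 0 (by simp)
  have hIcc : Tendsto (fun E => ν.real (Icc (E₀ - |E - E₀|) (E₀ + |E - E₀|))) (𝓝 E₀) (𝓝 0) :=
    (ENNReal.tendsto_toReal ENNReal.zero_ne_top).comp ((tendsto_measure_Icc ν E₀).comp hdist)
  refine tendsto_iff_dist_tendsto_zero.2 (squeeze_zero (fun _ => dist_nonneg) (fun E => ?_) hIcc)
  simp only [Real.dist_eq]
  rcases le_total E E₀ with h | h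
  · rw [abs_sub_comm, measureReal_Iio_sub_Iio ν h, abs_of_nonneg measureReal_nonneg]
    exact measureReal_mono (Ico_subset_Icc_self.trans
      (Icc_subset_Icc (by linarith [neg_abs_le (E - E₀)]) (by linarith [abs_nonneg (E - E₀)])))
  · rw [measureReal_Iio_sub_Iio ν h, abs_of_nonneg measureReal_nonneg]
    exact measureReal_mono (Ico_subset_Icc_self.trans
      (Icc_subset_Icc (by linarith [abs_nonneg (E - E₀)]) (by linarith [le_abs_self (E - E₀)])))

theorem integral_Iio_sub_integral_Iio_mem_Icc (ν : Measure ℝ) [IsFiniteMeasure ν]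
    (hν : Integrable (fun E => E) ν) {a b : ℝ} (hab : a ≤ b) :
    ∫ E in Iio b, E ∂ν - ∫ E in Iio a, E ∂ν ∈
      Icc (a * ν.real (Ico a b)) (b * ν.real (Ico a b)) := by
  rw [intervalIntegral.integral_Iio_sub_Iio hν.integrableOn hab]
  refine ⟨setIntegral_ge_of_const_le_real measurableSet_Ico (measure_ne_top _ _)
    (fun E hE => hE.1) hν.integrableOn, ?_⟩
  rw [mul_comm, ← smul_eq_mul, ← setIntegral_const]
  exact setIntegral_mono_on hν.integrableOn (integrableOn_const (measure_ne_top _ _))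
    measurableSet_Ico fun E hE => hE.2.le

theorem volume_abs_le_pi_cos_eq (c : ℝ) : volume {x : ℝ | |x| ≤ π ∧ cos x = c} = 0 := by
  refine measure_mono_null (t := {arccos c, -arccos c}) ?_ ((toFinite _).measure_zero volume)
  rintro x ⟨hx, rfl⟩
  have : arccos (cos x) = |x| := by rw [← cos_abs, arccos_cos (abs_nonneg x) hx]
  rcases abs_choice x with h | h <;> simp [this, h]

theorem continuous_epsk (d : ℕ) : Continuous (epsk d) := by
  unfold epsk
  fun_prop

theorem epsk_nonneg (d : ℕ) (k : Fin d → ℝ) : 0 ≤ epsk d k := by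
  have := Finset.sum_le_sum fun i (_ : i ∈ Finset.univ) => cos_le_one (k i)
  simp only [Finset.sum_const, Finset.card_univ, Fintype.card_fin, nsmul_eq_mul, mul_one] at this
  unfold epsk
  linarith

theorem epsk_le (d : ℕ) (k : Fin d → ℝ) : epsk d k ≤ 4 * d := by
  have := Finset.sum_le_sum fun i (_ : i ∈ Finset.univ) => neg_one_le_cos (k i)
  simp only [Finset.sum_const, Finset.card_univ, Fintype.card_fin, nsmul_eq_mul] at this
  unfold epsk
  linarith

theorem epsk_const (d : ℕ) (θ : ℝ) : epsk d (fun _ => θ) = 2 * d * (1 - cos θ) := by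
  simp only [epsk, Finset.sum_const, Finset.card_univ, Fintype.card_fin, nsmul_eq_mul]
  ring

def brillouinZone (d : ℕ) : Set (Fin d → ℝ) := pi univ fun _ => Icc (-π) π

theorem mem_brillouinZone {d : ℕ} {k : Fin d → ℝ} : k ∈ brillouinZone d ↔ inBZ d k := by
  simp only [brillouinZone, inBZ, Set.mem_pi, mem_univ, forall_const, mem_Icc, abs_le]

theorem isCompact_brillouinZone (d : ℕ) : IsCompact (brillouinZone d) :=
  isCompact_univ_pi fun _ => isCompact_Icc

theorem volume_real_brillouinZone (d : ℕ) : volume.real (brillouinZone d) = (2 * π) ^ d := by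
  rw [measureReal_def, brillouinZone, volume_pi_pi]
  simp [Real.volume_Icc, two_mul, pi_pos.le]

instance (d : ℕ) : IsFiniteMeasure (volume.restrict (brillouinZone d)) :=
  isFiniteMeasure_restrict.2 (isCompact_brillouinZone d).measure_ne_top

theorem volume_brillouinZone_inter_epsk_eq {d : ℕ} (hd : 1 ≤ d) (E : ℝ) :
    volume (brillouinZone d ∩ epsk d ⁻¹' {E}) = 0 := by
  obtain ⟨n, rfl⟩ : ∃ n, d = n + 1 := ⟨d - 1, by omega⟩
  -- Split off `k 0`: for fixed other coordinates at most two values of `k 0 ∈ [-π, π]` qualify.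
  set T : Set (ℝ × (Fin n → ℝ)) :=
    {p | |p.1| ≤ π ∧ cos p.1 = (n + 1 - E / 2) - ∑ j, cos (p.2 j)}
  have hT : MeasurableSet T :=
    ((isClosed_le (f := fun p : ℝ × (Fin n → ℝ) => |p.1|) (by fun_prop) continuous_const).inter
      (isClosed_eq (f := fun p : ℝ × (Fin n → ℝ) => cos p.1) (by fun_prop)
        (by fun_prop))).measurableSet
  have hT0 : volume T = 0 := by
    rw [Measure.volume_eq_prod, Measure.prod_apply_symm hT]
    refine (lintegral_congr fun y => ?_).trans lintegral_zero
    exact volume_abs_le_pi_cos_eq (n + 1 - E / 2 - ∑ j, cos (y j))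
  let e := MeasurableEquiv.piFinSuccAbove (fun _ : Fin (n + 1) => ℝ) 0
  have hsub : brillouinZone (n + 1) ∩ epsk (n + 1) ⁻¹' {E} ⊆ e ⁻¹' T := by
    rintro k ⟨hk, hE⟩
    rw [mem_brillouinZone] at hk
    simp only [mem_preimage, mem_singleton_iff, epsk, Fin.sum_univ_succ] at hE
    refine ⟨hk 0, ?_⟩
    change cos (k 0) = _ - ∑ j, cos (k (Fin.succAbove 0 j))
    simp only [Fin.succAbove_zero]
    push_cast at hE
    linarith
  refine measure_mono_null hsub ?_
  rw [(volume_preserving_piFinSuccAbove (fun _ : Fin (n + 1) => ℝ) 0).measure_preimage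
    hT.nullMeasurableSet, hT0]

def densityOfStates (d : ℕ) : Measure ℝ := (volume.restrict (brillouinZone d)).map (epsk d)

instance (d : ℕ) : IsFiniteMeasure (densityOfStates d) := by
  unfold densityOfStates
  infer_instance

theorem densityOfStates_apply (d : ℕ) {s : Set ℝ} (hs : MeasurableSet s) :
    densityOfStates d s = volume (brillouinZone d ∩ epsk d ⁻¹' s) := by
  have hpre := (continuous_epsk d).measurable hs
  rw [densityOfStates, Measure.map_apply (continuous_epsk d).measurable hs,
    Measure.restrict_apply hpre, inter_comm]

theorem nullSingletonClass_densityOfStates {d : ℕ} (hd : 1 ≤ d) :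
    NullSingletonClass (densityOfStates d) :=
  ⟨fun E => (densityOfStates_apply d (measurableSet_singleton E)).trans
    (volume_brillouinZone_inter_epsk_eq hd E)⟩

theorem volBelow_eq_densityOfStates (d : ℕ) (E : ℝ) :
    volBelow d E = (densityOfStates d).real (Iio E) := by
  rw [measureReal_def, densityOfStates_apply d measurableSet_Iio, volBelow]
  congr 2
  ext k
  simp [mem_brillouinZone]

theorem continuous_volBelow {d : ℕ} (hd : 1 ≤ d) : Continuous (volBelow d) := by
  have := nullSingletonClass_densityOfStates hd
  simpa only [← volBelow_eq_densityOfStates] using continuous_measureReal_Iio (densityOfStates d)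

theorem monotone_volBelow (d : ℕ) : Monotone (volBelow d) := fun a b hab => by
  simp only [volBelow_eq_densityOfStates]
  exact measureReal_mono (Iio_subset_Iio hab)

theorem volBelow_sub_volBelow (d : ℕ) {a b : ℝ} (hab : a ≤ b) :
    volBelow d b - volBelow d a = (densityOfStates d).real (Ico a b) := by
  simp only [volBelow_eq_densityOfStates]
  exact measureReal_Iio_sub_Iio _ hab

theorem volBelow_of_nonpos (d : ℕ) {E : ℝ} (hE : E ≤ 0) : volBelow d E = 0 := by
  have : epsk d ⁻¹' Iio E = ∅ :=
    eq_empty_of_forall_notMem fun k hk => (hE.trans (epsk_nonneg d k)).not_gt hk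
  rw [volBelow_eq_densityOfStates, measureReal_def, densityOfStates_apply d measurableSet_Iio,
    this, inter_empty, measure_empty, ENNReal.toReal_zero]

theorem volBelow_four_mul {d : ℕ} (hd : 1 ≤ d) : volBelow d (4 * d) = (2 * π) ^ d := by
  have := nullSingletonClass_densityOfStates hd
  have hall : epsk d ⁻¹' Iic (4 * d) = univ := eq_univ_of_forall (epsk_le d)
  rw [volBelow_eq_densityOfStates, measureReal_congr Iio_ae_eq_Iic, measureReal_def,
    densityOfStates_apply d measurableSet_Iic, hall, inter_univ, ← measureReal_def,
    volume_real_brillouinZone]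

theorem densityOfStates_Ioo_pos {d : ℕ} {a b : ℝ} (ha : 0 ≤ a) (hab : a < b)
    (hb : b ≤ 4 * d) : 0 < densityOfStates d (Ioo a b) := by
  obtain ⟨θ, hθ, hθE⟩ : (a + b) / 2 ∈ (fun θ => 2 * d * (1 - cos θ)) '' Ioo 0 π := by
    refine intermediate_value_Ioo pi_pos.le (by fun_prop) ⟨?_, ?_⟩ <;>
      simp only [cos_zero, cos_pi] <;> linarith
  set U : Set (Fin d → ℝ) := (pi univ fun _ => Ioo (-π) π) ∩ epsk d ⁻¹' Ioo a b
  have hU : IsOpen U :=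
    (isOpen_set_pi finite_univ fun _ _ => isOpen_Ioo).inter
      (isOpen_Ioo.preimage (continuous_epsk d))
  have hθU : (fun _ => θ) ∈ U := by
    refine ⟨fun _ _ => ⟨by linarith [pi_pos, hθ.1], hθ.2⟩, ?_⟩
    simp only [mem_preimage, epsk_const, hθE, mem_Ioo]
    constructor <;> linarith
  have hUsub : U ⊆ brillouinZone d ∩ epsk d ⁻¹' Ioo a b :=
    inter_subset_inter_left _ (pi_mono fun _ _ => Ioo_subset_Icc_self)
  rw [densityOfStates_apply d measurableSet_Ioo]
  exact (hU.measure_pos volume ⟨_, hθU⟩).trans_le (measure_mono hUsub)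

theorem strictMonoOn_volBelow (d : ℕ) : StrictMonoOn (volBelow d) (Icc 0 (4 * d)) := by
  intro a ha b hb hab
  rw [← sub_pos, volBelow_sub_volBelow d hab.le]
  exact ENNReal.toReal_pos
    ((densityOfStates_Ioo_pos ha.1 hab hb.2).trans_le (measure_mono Ioo_subset_Ico_self)).ne'
    (measure_ne_top _ _)

def fermiSet (d : ℕ) (ρ : ℝ) : Set ℝ := {E | ρ ≤ volBelow d E / (2 * π) ^ d}

theorem isClosed_fermiSet {d : ℕ} (hd : 1 ≤ d) (ρ : ℝ) : IsClosed (fermiSet d ρ) :=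
  isClosed_le continuous_const ((continuous_volBelow hd).div_const _)

theorem four_mul_mem_fermiSet {d : ℕ} (hd : 1 ≤ d) {ρ : ℝ} (hρ : ρ ≤ 1) :
    4 * (d : ℝ) ∈ fermiSet d ρ := by
  rwa [fermiSet, mem_ofPred_eq, volBelow_four_mul hd, div_self (by positivity)]

theorem pos_of_mem_fermiSet {d : ℕ} {ρ E : ℝ} (hρ : 0 < ρ) (hE : E ∈ fermiSet d ρ) : 0 < E := by
  by_contra! h
  rw [fermiSet, mem_ofPred_eq, volBelow_of_nonpos d h, zero_div] at hE
  linarith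

theorem bddBelow_fermiSet (d : ℕ) {ρ : ℝ} (hρ : 0 < ρ) : BddBelow (fermiSet d ρ) :=
  ⟨0, fun _ hE => (pos_of_mem_fermiSet hρ hE).le⟩

theorem fermiLevel_nonneg {d : ℕ} (hd : 1 ≤ d) {ρ : ℝ} (hρ : 0 < ρ) (hρ1 : ρ ≤ 1) :
    0 ≤ fermiLevel d ρ :=
  le_csInf ⟨_, four_mul_mem_fermiSet hd hρ1⟩ fun _ hE => (pos_of_mem_fermiSet hρ hE).le

theorem fermiLevel_le {d : ℕ} (hd : 1 ≤ d) {ρ : ℝ} (hρ : 0 < ρ) (hρ1 : ρ ≤ 1) :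
    fermiLevel d ρ ≤ 4 * d :=
  csInf_le (bddBelow_fermiSet d hρ) (four_mul_mem_fermiSet hd hρ1)

theorem monotoneOn_fermiLevel {d : ℕ} (hd : 1 ≤ d) : MonotoneOn (fermiLevel d) (Ioc 0 1) :=
  fun _ hρ _ hρ' hle => csInf_le_csInf (bddBelow_fermiSet d hρ.1)
    ⟨_, four_mul_mem_fermiSet hd hρ'.2⟩ fun _ hE => hle.trans hE

theorem fermiLevel_mem_fermiSet {d : ℕ} (hd : 1 ≤ d) {ρ : ℝ} (hρ : 0 < ρ) (hρ1 : ρ ≤ 1) :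
    fermiLevel d ρ ∈ fermiSet d ρ :=
  (isClosed_fermiSet hd ρ).csInf_mem ⟨_, four_mul_mem_fermiSet hd hρ1⟩ (bddBelow_fermiSet d hρ)

theorem volBelow_fermiLevel {d : ℕ} (hd : 1 ≤ d) {ρ : ℝ} (hρ : 0 < ρ) (hρ1 : ρ ≤ 1) :
    volBelow d (fermiLevel d ρ) = ρ * (2 * π) ^ d := by
  have hF := fermiLevel_mem_fermiSet hd hρ hρ1
  obtain ⟨E, hE, hEρ⟩ : ρ ∈ (fun E => volBelow d E / (2 * π) ^ d) '' Icc 0 (fermiLevel d ρ) := by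
    refine intermediate_value_Icc (fermiLevel_nonneg hd hρ hρ1)
      ((continuous_volBelow hd).div_const _).continuousOn ⟨?_, hF⟩
    rw [volBelow_of_nonpos d le_rfl, zero_div]
    exact hρ.le
  -- the point given by the intermediate value theorem lies in `fermiSet`, so it is `ε_F` itself
  have hFE : fermiLevel d ρ ≤ E := csInf_le (bddBelow_fermiSet d hρ) hEρ.ge
  beta_reduce at hEρ
  rw [← le_antisymm hE.2 hFE, ← hEρ, div_mul_cancel₀ _ (by positivity)]

theorem fermiLevel_volBelow_div {d : ℕ} {E : ℝ} (hE : E ∈ Ioo 0 (4 * d : ℝ)) :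
    fermiLevel d (volBelow d E / (2 * π) ^ d) = E := by
  refine IsLeast.csInf_eq ⟨mem_ofPred.2 le_rfl, fun E' hE' => ?_⟩
  by_contra! hlt
  have hc : 0 < (2 * π) ^ d := by positivity
  have hlt' : volBelow d E' < volBelow d E :=
    (monotone_volBelow d (le_max_left E' 0)).trans_lt
      (strictMonoOn_volBelow d ⟨le_max_right _ _, max_le (hlt.le.trans hE.2.le) (by positivity)⟩
        ⟨hE.1.le, hE.2.le⟩ (max_lt hlt hE.1))
  exact (div_lt_div_of_pos_right hlt' hc).not_ge hE'

theorem continuousAt_fermiLevel {d : ℕ} (hd : 1 ≤ d) {ρ : ℝ} (hρ : ρ ∈ Ioo 0 1) :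
    ContinuousAt (fermiLevel d) ρ := by
  have hc : 0 < (2 * π) ^ d := by positivity
  have hF : fermiLevel d ρ ∈ Ioo 0 (4 * d : ℝ) := by
    refine ⟨pos_of_mem_fermiSet hρ.1 (fermiLevel_mem_fermiSet hd hρ.1 hρ.2.le),
      (fermiLevel_le hd hρ.1 hρ.2.le).lt_of_ne fun h => hρ.2.ne ?_⟩
    have := volBelow_fermiLevel hd hρ.1 hρ.2.le
    rw [h, volBelow_four_mul hd] at this
    nlinarith
  refine continuousAt_of_monotoneOn_of_image_mem_nhds
    ((monotoneOn_fermiLevel hd).mono Ioo_subset_Ioc_self) (isOpen_Ioo.mem_nhds hρ)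
    (mem_of_superset (isOpen_Ioo.mem_nhds hF) fun E hE => ?_)
  have hmono := strictMonoOn_volBelow d
  have h0 : 0 < volBelow d E := by
    simpa [volBelow_of_nonpos d le_rfl] using
      hmono ⟨le_rfl, by positivity⟩ ⟨hE.1.le, hE.2.le⟩ hE.1
  have h1 : volBelow d E < (2 * π) ^ d := by
    simpa [volBelow_four_mul hd] using hmono ⟨hE.1.le, hE.2.le⟩ ⟨by positivity, le_rfl⟩ hE.2
  exact ⟨volBelow d E / (2 * π) ^ d, ⟨div_pos h0 hc, (div_lt_one hc).2 h1⟩,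
    fermiLevel_volBelow_div hE⟩

theorem enGS_eq_integral (d : ℕ) (ρ : ℝ) :
    enGS d ρ = (∫ E in Iio (fermiLevel d ρ), E ∂densityOfStates d) / (2 * π) ^ d := by
  have hε := (continuous_epsk d).measurable
  rw [enGS, densityOfStates,
    setIntegral_map (f := fun E => E) measurableSet_Iio aestronglyMeasurable_id hε.aemeasurable,
    Measure.restrict_restrict (hε measurableSet_Iio)]
  congr 3
  ext k
  simp only [mem_inter_iff, mem_preimage, mem_Iio, mem_ofPred_eq, mem_brillouinZone, and_comm]

theorem integrable_densityOfStates (d : ℕ) : Integrable (fun E => E) (densityOfStates d) := by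
  rw [densityOfStates, integrable_map_measure (g := fun E => E) aestronglyMeasurable_id
    (continuous_epsk d).measurable.aemeasurable]
  refine Integrable.of_bound (continuous_epsk d).aestronglyMeasurable (4 * d)
    (ae_of_all _ fun k => ?_)
  simpa [abs_of_nonneg (epsk_nonneg d k)] using epsk_le d k

theorem enGS_sub_enGS_mem_Icc {d : ℕ} (hd : 1 ≤ d) {ρ ρ' : ℝ} (hρ : 0 < ρ) (hρρ' : ρ ≤ ρ')
    (hρ' : ρ' ≤ 1) :
    enGS d ρ' - enGS d ρ ∈ Icc (fermiLevel d ρ * (ρ' - ρ)) (fermiLevel d ρ' * (ρ' - ρ)) := by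
  have hc : 0 < (2 * π) ^ d := by positivity
  have hF := monotoneOn_fermiLevel hd ⟨hρ, hρρ'.trans hρ'⟩ ⟨hρ.trans_le hρρ', hρ'⟩ hρρ'
  have hshell : (densityOfStates d).real (Ico (fermiLevel d ρ) (fermiLevel d ρ')) =
      (ρ' - ρ) * (2 * π) ^ d := by
    rw [← volBelow_sub_volBelow d hF, volBelow_fermiLevel hd (hρ.trans_le hρρ') hρ',
      volBelow_fermiLevel hd hρ (hρρ'.trans hρ')]
    ring
  obtain ⟨hlo, hhi⟩ :=
    integral_Iio_sub_integral_Iio_mem_Icc _ (integrable_densityOfStates d) hF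
  rw [hshell] at hlo hhi
  rw [enGS_eq_integral, enGS_eq_integral, ← sub_div]
  constructor
  · rw [le_div_iff₀ hc]; linarith
  · rw [div_le_iff₀ hc]; linarith

theorem monotoneOn_xiFun {d : ℕ} (hd : 1 ≤ d) : MonotoneOn (xiFun d) (Ioc 0 1) := by
  intro ρ hρ ρ' hρ' hle
  have hF := monotoneOn_fermiLevel hd hρ hρ' hle
  have he := (enGS_sub_enGS_mem_Icc hd hρ.1 hle hρ'.2).2
  simp only [xiFun]
  nlinarith [hρ.1]

theorem lipschitzOnWith_enGS {d : ℕ} (hd : 1 ≤ d) :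
    LipschitzOnWith (4 * d : ℝ≥0) (enGS d) (Ioc 0 1) := by
  refine LipschitzOnWith.of_dist_le_mul fun ρ hρ ρ' hρ' => ?_
  wlog hle : ρ ≤ ρ' generalizing ρ ρ'
  · rw [dist_comm, dist_comm ρ]
    exact this ρ' hρ' ρ hρ (le_of_not_ge hle)
  obtain ⟨hlo, hhi⟩ := enGS_sub_enGS_mem_Icc hd hρ.1 hle hρ'.2
  have h0 := fermiLevel_nonneg hd hρ.1 hρ.2
  have h4 := fermiLevel_le hd hρ'.1 hρ'.2
  push_cast
  rw [Real.dist_eq, Real.dist_eq, abs_sub_comm, abs_of_nonneg (by nlinarith), abs_sub_comm,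
    abs_of_nonneg (by linarith)]
  nlinarith

theorem continuousOn_enGS {d : ℕ} (hd : 1 ≤ d) : ContinuousOn (enGS d) (Ioc 0 1) :=
  (lipschitzOnWith_enGS hd).continuousOn

theorem hasDerivAt_enGS {d : ℕ} (hd : 1 ≤ d) {ρ : ℝ} (hρ : ρ ∈ Ioo 0 1) :
    HasDerivAt (enGS d) (fermiLevel d ρ) ρ :=
  hasDerivAt_of_sub_mem_Icc (Ioc_mem_nhds hρ.1 hρ.2) (continuousAt_fermiLevel hd hρ)
    fun _ hx _ hy hxy => enGS_sub_enGS_mem_Icc hd hx.1 hxy hy.2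

def segregatedEnergy (d : ℕ) (t ρ1 ρ2 ν : ℝ) : ℝ :=
  (1 - ν) * enGS d (ρ1 / (1 - ν)) + t * ν * enGS d (ρ2 / ν)

section segregated

variable {d : ℕ} {t ρ1 ρ2 : ℝ}

theorem hasDerivAt_segregatedEnergy (hd : 1 ≤ d) (h1 : 0 < ρ1) (h2 : 0 < ρ2) {ν : ℝ}
    (hν : ν ∈ Ioo ρ2 (1 - ρ1)) :
    HasDerivAt (segregatedEnergy d t ρ1 ρ2)
      (xiFun d (ρ1 / (1 - ν)) - t * xiFun d (ρ2 / ν)) ν := by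
  have hν0 : 0 < ν := h2.trans hν.1
  have hν1 : 0 < 1 - ν := by linarith [hν.2]
  have hφ1 := div_mem_Ioo h1 (lt_sub_comm.1 hν.2)
  have hφ2 := div_mem_Ioo h2 hν.1
  have hleft := (hasDerivAt_mul_comp_div hν1.ne' (hasDerivAt_enGS hd hφ1)).comp ν
    ((hasDerivAt_id ν).const_sub 1)
  have hright := (hasDerivAt_mul_comp_div hν0.ne' (hasDerivAt_enGS hd hφ2)).const_mul t
  have hsplit : segregatedEnergy d t ρ1 ρ2 =
      fun ν => (1 - ν) * enGS d (ρ1 / (1 - ν)) + t * (ν * enGS d (ρ2 / ν)) := by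
    ext ν
    rw [segregatedEnergy, mul_assoc]
  rw [hsplit]
  refine (hleft.add hright).congr_deriv ?_
  simp only [xiFun]
  ring

theorem continuousOn_segregatedEnergy (hd : 1 ≤ d) (h1 : 0 < ρ1) (h2 : 0 < ρ2) :
    ContinuousOn (segregatedEnergy d t ρ1 ρ2) (Icc ρ2 (1 - ρ1)) := by
  have hφ1 : MapsTo (fun ν => ρ1 / (1 - ν)) (Icc ρ2 (1 - ρ1)) (Ioc 0 1) := fun ν hν =>
    div_mem_Ioc h1 (le_sub_comm.1 hν.2)
  have hφ2 : MapsTo (fun ν => ρ2 / ν) (Icc ρ2 (1 - ρ1)) (Ioc 0 1) := fun ν hν =>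
    div_mem_Ioc h2 hν.1
  have hc1 : ContinuousOn (fun ν => ρ1 / (1 - ν)) (Icc ρ2 (1 - ρ1)) :=
    continuousOn_const.div (by fun_prop) fun ν hν => by linarith [hν.2]
  have hc2 : ContinuousOn (fun ν => ρ2 / ν) (Icc ρ2 (1 - ρ1)) :=
    continuousOn_const.div continuousOn_id fun ν hν => (h2.trans_le hν.1).ne'
  exact ((continuousOn_const.sub continuousOn_id).mul ((continuousOn_enGS hd).comp hc1 hφ1)).add
    ((continuousOn_const.mul continuousOn_id).mul ((continuousOn_enGS hd).comp hc2 hφ2))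

theorem monotoneOn_segregatedEnergy_deriv (hd : 1 ≤ d) (ht : 0 ≤ t) (h1 : 0 < ρ1) (h2 : 0 < ρ2) :
    MonotoneOn (fun ν => xiFun d (ρ1 / (1 - ν)) - t * xiFun d (ρ2 / ν)) (Ioo ρ2 (1 - ρ1)) := by
  intro ν hν ν' hν' hle
  have hx1 : xiFun d (ρ1 / (1 - ν)) ≤ xiFun d (ρ1 / (1 - ν')) :=
    monotoneOn_xiFun hd (div_mem_Ioc h1 (le_sub_comm.1 hν.2.le))
      (div_mem_Ioc h1 (le_sub_comm.1 hν'.2.le))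
      (div_le_div_of_nonneg_left h1.le (by linarith [hν'.2]) (by linarith))
  have hx2 : xiFun d (ρ2 / ν') ≤ xiFun d (ρ2 / ν) :=
    monotoneOn_xiFun hd (div_mem_Ioc h2 hν'.1.le) (div_mem_Ioc h2 hν.1.le)
      (div_le_div_of_nonneg_left h2.le (h2.trans hν.1) hle)
  linarith [mul_le_mul_of_nonneg_left hx2 ht]

end segregated

theorem segregated_energy_convex_general (d : ℕ) (hd : 1 ≤ d) (t ρ1 ρ2 : ℝ)
    (ht0 : 0 ≤ t) (h1 : 0 < ρ1) (h2 : 0 < ρ2) :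
    ConvexOn ℝ (Set.Icc ρ2 (1 - ρ1))
      (fun ν => (1 - ν) * enGS d (ρ1 / (1 - ν)) + t * ν * enGS d (ρ2 / ν)) ∧
    (∀ ν ∈ Set.Ioo ρ2 (1 - ρ1),
      HasDerivAt (fun ν => (1 - ν) * enGS d (ρ1 / (1 - ν)) + t * ν * enGS d (ρ2 / ν))
        (xiFun d (ρ1 / (1 - ν)) - t * xiFun d (ρ2 / ν)) ν) := by
  have hderiv := fun ν (hν : ν ∈ Ioo ρ2 (1 - ρ1)) =>
    hasDerivAt_segregatedEnergy (t := t) hd h1 h2 hν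
  exact ⟨convexOn_Icc_of_hasDerivAt (continuousOn_segregatedEnergy hd h1 h2) hderiv
    (monotoneOn_segregatedEnergy_deriv hd ht0 h1 h2), hderiv⟩

/-- For `d ≥ 1`, `t ∈ [0,1]` and densities `ρ1, ρ2 > 0` with `ρ1 + ρ2 < 1`, the
segregated energy per site `E(ν) = (1−ν)·e(ρ1/(1−ν)) + t·ν·e(ρ2/ν)` is convex on
`[ρ2, 1−ρ1]` and differentiable on the interior with
`E′(ν) = ξ(ρ1/(1−ν)) − t·ξ(ρ2/ν)`. -/
theorem segregated_energy_convex (d : ℕ) (hd : 1 ≤ d) (t ρ1 ρ2 : ℝ)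
    (ht0 : 0 ≤ t) (ht1 : t ≤ 1) (h1 : 0 < ρ1) (h2 : 0 < ρ2) (hsum : ρ1 + ρ2 < 1) :
    ConvexOn ℝ (Set.Icc ρ2 (1 - ρ1))
      (fun ν => (1 - ν) * enGS d (ρ1 / (1 - ν)) + t * ν * enGS d (ρ2 / ν)) ∧
    (∀ ν ∈ Set.Ioo ρ2 (1 - ρ1),
      HasDerivAt (fun ν => (1 - ν) * enGS d (ρ1 / (1 - ν)) + t * ν * enGS d (ρ2 / ν))
        (xiFun d (ρ1 / (1 - ν)) - t * xiFun d (ρ2 / ν)) ν) :=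
  segregated_energy_convex_general d hd t ρ1 ρ2 ht0 h1 h2

end
end
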